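/- arXiv:2408.16652 — 2 statements merged into one kernel-verified Lean document; each statement's English description precedes it below -/
import Mathlib

section
/- Suppose the flexible Golub–Kahan relations AZ_k = Ũ_{k+1}P_k and AᵀŨ_{k+1} = W_{k+1}T_{k+1} hold, with W_{k+1} having orthonormal columns, b = β̃₁ũ₁, and Aᵀũ₁ = t_{1,1}w₁. Then for x = Z_k y, Aᵀ(b − Ax) = W_{k+1}(β̃₁t_{1,1}e₁ − T_{k+1}P_k y), and hence ‖Aᵀ(b − AZ_k y)‖₂ = ‖β̃₁t_{1,1}e₁ − T_{k+1}P_k y‖₂. -/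
/-!
Both relations move `Aᵀ` past the Krylov bases: `AᵀAZ_k = AᵀŨ_{k+1}P_k = W_{k+1}T_{k+1}P_k`, and
`Aᵀb = β̃₁Aᵀũ₁ = β̃₁t₁₁w₁ = W_{k+1}(β̃₁t₁₁e₁)`. So the normal-equations residual lies in the range of
`W_{k+1}`, and orthonormal columns preserve the Euclidean norm.
-/

open Matrix

/-- The Euclidean (ℓ₂) norm of a real vector. -/
noncomputable def enorm' {m : ℕ} (v : Fin m → ℝ) : ℝ := ‖(WithLp.equiv 2 (Fin m → ℝ)).symm v‖

theorem enorm'_eq_sqrt_dotProduct {m : ℕ} (v : Fin m → ℝ) : enorm' v = √(v ⬝ᵥ v) :=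
  norm_eq_sqrt_real_inner _

theorem dotProduct_mulVec_self_of_transpose_mul_self_eq_one {R m n : Type*} [CommSemiring R]
    [Fintype m] [Fintype n] [DecidableEq n] {W : Matrix m n R} (hW : Wᵀ * W = 1) (v : n → R) :
    W *ᵥ v ⬝ᵥ W *ᵥ v = v ⬝ᵥ v := by
  rw [dotProduct_mulVec, vecMul_mulVec, hW, vecMul_one]

theorem enorm'_mulVec_of_transpose_mul_self_eq_one {m n : ℕ} {W : Matrix (Fin m) (Fin n) ℝ}
    (hW : Wᵀ * W = 1) (v : Fin n → ℝ) : enorm' (W *ᵥ v) = enorm' v := by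
  rw [enorm'_eq_sqrt_dotProduct, enorm'_eq_sqrt_dotProduct,
    dotProduct_mulVec_self_of_transpose_mul_self_eq_one hW]

section Residual

variable {R m n k l : Type*} [CommRing R] [Fintype m] [Fintype n] [Fintype k] [Fintype l]
  {A : Matrix m n R} {Z : Matrix n k R} {U : Matrix m l R} {W : Matrix n l R}
  {P : Matrix l k R} {T : Matrix l l R}

theorem transpose_mulVec_mulVec_mulVec_of_mul_eq (h1 : A * Z = U * P) (h2 : Aᵀ * U = W * T)
    (y : k → R) : Aᵀ *ᵥ (A *ᵥ (Z *ᵥ y)) = W *ᵥ ((T * P) *ᵥ y) := by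
  rw [mulVec_mulVec y A Z, h1, mulVec_mulVec, mulVec_mulVec, ← Matrix.mul_assoc, h2,
    Matrix.mul_assoc]

theorem transpose_mulVec_sub_mulVec_mulVec_eq [DecidableEq l] (h1 : A * Z = U * P)
    (h2 : Aᵀ * U = W * T) {b : m → R} {β : R} {j : l} (hb : b = β • fun i => U i j)
    (hu : Aᵀ *ᵥ (fun i => U i j) = T j j • fun i => W i j) (y : k → R) :
    Aᵀ *ᵥ (b - A *ᵥ (Z *ᵥ y)) = W *ᵥ ((β * T j j) • Pi.single j 1 - (T * P) *ᵥ y) := by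
  have hb' : Aᵀ *ᵥ b = W *ᵥ ((β * T j j) • Pi.single j 1) := by
    rw [hb, mulVec_smul, hu, smul_smul, mulVec_smul, mulVec_single_one]
    rfl
  rw [mulVec_sub, mulVec_sub, hb', transpose_mulVec_mulVec_mulVec_of_mul_eq h1 h2]

end Residual

theorem stmt11_general (m n k : ℕ)
    (A : Matrix (Fin m) (Fin n) ℝ) (b : Fin m → ℝ)
    (Z : Matrix (Fin n) (Fin k) ℝ)
    (U : Matrix (Fin m) (Fin (k + 1)) ℝ)
    (W : Matrix (Fin n) (Fin (k + 1)) ℝ)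
    (P : Matrix (Fin (k + 1)) (Fin k) ℝ)
    (T : Matrix (Fin (k + 1)) (Fin (k + 1)) ℝ)
    (hW : Wᵀ * W = 1)
    (h1 : A * Z = U * P)
    (h2 : Aᵀ * U = W * T)
    (βt1 : ℝ) (hb : b = βt1 • (fun i => U i 0))
    (hu1 : Aᵀ.mulVec (fun i => U i 0) = T 0 0 • (fun i => W i 0))
    (y : Fin k → ℝ) :
    Aᵀ.mulVec (b - A.mulVec (Z.mulVec y)) =
        W.mulVec ((βt1 * T 0 0) • (Pi.single 0 (1 : ℝ) : Fin (k + 1) → ℝ) -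
          (T * P).mulVec y) ∧
      enorm' (Aᵀ.mulVec (b - A.mulVec (Z.mulVec y))) =
        enorm' ((βt1 * T 0 0) • (Pi.single 0 (1 : ℝ) : Fin (k + 1) → ℝ) -
          (T * P).mulVec y) := by
  have hres := transpose_mulVec_sub_mulVec_mulVec_eq h1 h2 hb hu1 y
  exact ⟨hres, by rw [hres, enorm'_mulVec_of_transpose_mul_self_eq_one hW]⟩

/-- Under the flexible Golub–Kahan relations `AZ_k = Ũ_{k+1}P_k`,
`AᵀŨ_{k+1} = W_{k+1}T_{k+1}` with `W_{k+1}` orthonormal, `b = β̃₁ũ₁`,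
`Aᵀũ₁ = t₁₁w₁`: for `x = Z_k y`,
`Aᵀ(b − Ax) = W_{k+1}(β̃₁t₁₁e₁ − T_{k+1}P_k y)` and the norms agree. -/
theorem stmt11 (m n k : ℕ)
    (A : Matrix (Fin m) (Fin n) ℝ) (b : Fin m → ℝ)
    (Z : Matrix (Fin n) (Fin k) ℝ)
    (U : Matrix (Fin m) (Fin (k + 1)) ℝ)
    (W : Matrix (Fin n) (Fin (k + 1)) ℝ)
    (P : Matrix (Fin (k + 1)) (Fin k) ℝ)
    (T : Matrix (Fin (k + 1)) (Fin (k + 1)) ℝ)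
    (hW : Wᵀ * W = 1)
    (h1 : A * Z = U * P)
    (h2 : Aᵀ * U = W * T)
    (βt1 : ℝ) (hβ : βt1 = enorm' b) (hb : b = βt1 • (fun i => U i 0))
    (hu1 : Aᵀ.mulVec (fun i => U i 0) = T 0 0 • (fun i => W i 0))
    (y : Fin k → ℝ) :
    Aᵀ.mulVec (b - A.mulVec (Z.mulVec y)) =
        W.mulVec ((βt1 * T 0 0) • (Pi.single 0 (1 : ℝ) : Fin (k + 1) → ℝ) -
          (T * P).mulVec y) ∧
      enorm' (Aᵀ.mulVec (b - A.mulVec (Z.mulVec y))) =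
        enorm' ((βt1 * T 0 0) • (Pi.single 0 (1 : ℝ) : Fin (k + 1) → ℝ) -
          (T * P).mulVec y) :=
  stmt11_general m n k A b Z U W P T hW h1 h2 βt1 hb hu1 y
end

section
/- Under the flexible Golub–Kahan relations AZ_k = Ũ_{k+1}P_k and AᵀŨ_{k+1} = W_{k+1}T_{k+1} with Z_k = M⁻¹W_k (all inner preconditioners equal to M), one has AᵀAM⁻¹W_k = W_{k+1}T_{k+1}P_k, i.e., the flexible process is an Arnoldi-type relation for the right-preconditioned matrix AᵀAM⁻¹. -/
open Matrix

/-- Under the flexible Golub–Kahan relations with all inner preconditioners equal to `M`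
(`Z_k = M⁻¹W_k`), one has the Arnoldi-type relation `AᵀAM⁻¹W_k = W_{k+1}T_{k+1}P_k`. -/
theorem stmt12 (m n k : ℕ)
    (A : Matrix (Fin m) (Fin n) ℝ)
    (M : Matrix (Fin n) (Fin n) ℝ) (hM : M.PosDef)
    (U : Matrix (Fin m) (Fin (k + 1)) ℝ)
    (Wp : Matrix (Fin n) (Fin (k + 1)) ℝ)
    (P : Matrix (Fin (k + 1)) (Fin k) ℝ)
    (T : Matrix (Fin (k + 1)) (Fin (k + 1)) ℝ)
    (hW : Wpᵀ * Wp = 1)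
    (W : Matrix (Fin n) (Fin k) ℝ) (hWk : W = Wp.submatrix id Fin.castSucc)
    (Z : Matrix (Fin n) (Fin k) ℝ) (hZ : Z = M⁻¹ * W)
    (h1 : A * Z = U * P)
    (h2 : Aᵀ * U = Wp * T) :
    Aᵀ * A * (M⁻¹ * W) = Wp * (T * P) := by
  rw [← hZ, Matrix.mul_assoc, h1, ← Matrix.mul_assoc, h2, Matrix.mul_assoc]
end
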